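/- arXiv:0704.0615 — 2 statements merged into one kernel-verified Lean document; each statement's English description precedes it below -/
import Mathlib

section
/- Performing a single TBR (tree bisection and reconnection) rearrangement on a fully resolved phylogenetic tree increases the parsimony length of any unordered reversible character by at most one: if T' differs from T by one TBR move, then ℓ(X,T') ≤ ℓ(X,T) + 1. -/
/-!
Take an extension `f` of the character that is optimal on `T`, and on `T'` change it only at the
two reused vertices: give `u` the state of `x` and `v` the state of `p`. Old edges that survive
and avoid `u`, `v` keep their status, and the new edges `u x`, `v p` are unchanged. The edge
`u y` changes only if `x y` did, `v q` only if `p q` did, and `a b` (resp. `c d`) only if one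
of `u a`, `u b` (resp. `v c`, `v d`) did. So the removed edges of `T` pay for every new change,
and only the edge `u v` is left unpaid.
-/

/-- A fully resolved (binary) unrooted phylogenetic tree on vertex set `V` with
leaf set `L`: a tree in which every leaf has degree 1 and every internal
(non-leaf) vertex has degree 3. -/
structure PhyloTree (V : Type*) [Fintype V] (L : Set V) where
  graph : SimpleGraph V
  isTree : graph.IsTree
  leaf_deg : ∀ v ∈ L, (graph.neighborSet v).ncard = 1
  internal_deg : ∀ v ∉ L, (graph.neighborSet v).ncard = 3

/-- The number of edges of `G` whose two endpoints receive different states under `f`. -/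
noncomputable def changedEdges {V S : Type*} (G : SimpleGraph V) (f : V → S) : ℕ :=
  {e | e ∈ G.edgeSet ∧ ¬ (Sym2.map f e).IsDiag}.ncard

/-- The (Fitch) parsimony length of character `X` on the tree `T`: the minimum over
all extensions of `X` to the internal vertices of the number of edges whose
endpoints receive different states. -/
noncomputable def parsLen {V : Type*} [Fintype V] {L : Set V} {S : Type*}
    (T : PhyloTree V L) (X : L → S) : ℕ :=
  sInf { n | ∃ f : V → S, (∀ v : L, f ↑v = X v) ∧ changedEdges T.graph f = n }

/-- The number of states of a character. -/
noncomputable def numStates {L S : Type*} (X : L → S) : ℕ := (Set.range X).ncard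

/-- `T'` is obtained from `T` by a single SPR (subtree prune and regraft)
rearrangement: the edge `{u,v}` is cut detaching the subtree containing `v`
(the degree-2 vertex left behind is suppressed, i.e. `u`'s other two neighbours
`a` and `b` are joined directly), and the subtree is regrafted by attaching `u`
to a subdivision point of the edge `{x,y}` (the vertex `u` serves as the
subdivision point). The requirement that the result again be a phylogenetic tree
forces `{x,y}` to lie in the component not containing `v`. -/
def SPRMove {V : Type*} [Fintype V] {L : Set V} (T T' : PhyloTree V L) : Prop :=
  ∃ u v a b x y : V, u ∉ L ∧
    T.graph.Adj u v ∧ T.graph.Adj u a ∧ T.graph.Adj u b ∧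
    a ≠ b ∧ a ≠ v ∧ b ≠ v ∧
    T.graph.Adj x y ∧ u ≠ x ∧ u ≠ y ∧
    T'.graph = SimpleGraph.fromEdgeSet
      ((T.graph.edgeSet \ {s(u,a), s(u,b), s(x,y)}) ∪ {s(a,b), s(u,x), s(u,y)})

/-- `T'` is obtained from `T` by a single TBR (tree bisection and reconnection)
rearrangement: an edge `{u,v}` is removed, the two resulting degree-2 vertices
are suppressed, and the two components are reconnected by a new edge joining a
subdivision point of an edge of one component to a subdivision point of an edge
of the other (the vertices `u` and `v` serve as subdivision points). When one
of the two reattachment points is unchanged this degenerates to an SPR move. -/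
def TBRMove {V : Type*} [Fintype V] {L : Set V} (T T' : PhyloTree V L) : Prop :=
  SPRMove T T' ∨
  ∃ u v a b c d x y p q : V, u ∉ L ∧ v ∉ L ∧
    T.graph.Adj u v ∧
    T.graph.Adj u a ∧ T.graph.Adj u b ∧ a ≠ b ∧ a ≠ v ∧ b ≠ v ∧
    T.graph.Adj v c ∧ T.graph.Adj v d ∧ c ≠ d ∧ c ≠ u ∧ d ≠ u ∧
    T.graph.Adj x y ∧ u ≠ x ∧ u ≠ y ∧ v ≠ x ∧ v ≠ y ∧
    T.graph.Adj p q ∧ u ≠ p ∧ u ≠ q ∧ v ≠ p ∧ v ≠ q ∧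
    T'.graph = SimpleGraph.fromEdgeSet
      ((T.graph.edgeSet \ {s(u,a), s(u,b), s(v,c), s(v,d), s(x,y), s(p,q)}) ∪
        {s(a,b), s(c,d), s(u,x), s(u,y), s(v,p), s(v,q)})

/-- Two phylogenetic trees are isomorphic (equal as phylogenetic trees) if there
is a graph isomorphism between them fixing every leaf. -/
def PhyloIso {V : Type*} [Fintype V] {L : Set V} (T T' : PhyloTree V L) : Prop :=
  ∃ φ : T.graph ≃g T'.graph, ∀ v ∈ L, φ v = v

/-- The SPR distance: the minimum number of SPR rearrangements transforming `T`
into (a tree isomorphic to) `T'`. -/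
noncomputable def SPRDist {V : Type*} [Fintype V] {L : Set V} (T T' : PhyloTree V L) : ℕ :=
  sInf { n | ∃ g : ℕ → PhyloTree V L, g 0 = T ∧ PhyloIso (g n) T' ∧
    ∀ i < n, SPRMove (g i) (g (i + 1)) }

/-- The TBR distance: the minimum number of TBR rearrangements transforming `T`
into (a tree isomorphic to) `T'`. -/
noncomputable def TBRDist {V : Type*} [Fintype V] {L : Set V} (T T' : PhyloTree V L) : ℕ :=
  sInf { n | ∃ g : ℕ → PhyloTree V L, g 0 = T ∧ PhyloIso (g n) T' ∧
    ∀ i < n, TBRMove (g i) (g (i + 1)) }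

/-- A character with `r` states is compatible with (convex on) a tree iff its
parsimony length on the tree is `r - 1`. -/
def Compatible {V : Type*} [Fintype V] {L : Set V} {S : Type*}
    (X : L → S) (r : ℕ) (T : PhyloTree V L) : Prop :=
  parsLen T X = r - 1

/-- The SPR distance from a tree `T` to a character `X` (with `r` states): the
minimum SPR distance from `T` to a fully resolved tree compatible with `X`. -/
noncomputable def charSPRDist {V : Type*} [Fintype V] {L : Set V} {S : Type*}
    (T : PhyloTree V L) (X : L → S) (r : ℕ) : ℕ :=
  sInf { d | ∃ T' : PhyloTree V L, Compatible X r T' ∧ d = SPRDist T T' }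

/-- The TBR distance from a tree `T` to a character `X` (with `r` states). -/
noncomputable def charTBRDist {V : Type*} [Fintype V] {L : Set V} {S : Type*}
    (T : PhyloTree V L) (X : L → S) (r : ℕ) : ℕ :=
  sInf { d | ∃ T' : PhyloTree V L, Compatible X r T' ∧ d = TBRDist T T' }

/-- The total incongruence score of two characters with `r₁` and `r₂` states:
the maximum parsimony score of the pair minus the minimum number of changes
required for each character. -/
noncomputable def incong (V : Type*) [Fintype V] (L : Set V) {S₁ S₂ : Type*}
    (X₁ : L → S₁) (X₂ : L → S₂) (r₁ r₂ : ℕ) : ℕ :=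
  sInf { n | ∃ T : PhyloTree V L, n = parsLen T X₁ + parsLen T X₂ } - (r₁ - 1) - (r₂ - 1)

open SimpleGraph Set Function

section ChangeCount

variable {V S : Type*}

/-- `changedEdges G f` is `changeCount G.edgeSet f` by definition; counting on edge sets lets us
compare the trees before and after a move. -/
noncomputable def changeCount (E : Set (Sym2 V)) (f : V → S) : ℕ :=
  (E ∩ {e | ¬ (e.map f).IsDiag}).ncard

lemma changeCount_congr {E : Set (Sym2 V)} {f g : V → S}
    (h : ∀ e ∈ E, ∀ w ∈ e, f w = g w) : changeCount E f = changeCount E g := by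
  unfold changeCount
  congr 1
  ext e
  induction e using Sym2.ind with
  | _ w z => simp +contextual [h s(w, z)]

open Classical in
lemma changeCount_singleton (f : V → S) (w z : V) :
    changeCount {s(w, z)} f = if f w = f z then 0 else 1 := by
  unfold changeCount
  split_ifs with h <;> simp [h]

variable {E F : Set (Sym2 V)} {f : V → S}

lemma changeCount_union_le : changeCount (E ∪ F) f ≤ changeCount E f + changeCount F f := by
  unfold changeCount
  rw [union_inter_distrib_right]
  exact ncard_union_le _ _

lemma changeCount_insert_le (e : Sym2 V) : changeCount (insert e E) f ≤ changeCount E f + 1 := by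
  unfold changeCount
  by_cases he : e ∈ {e : Sym2 V | ¬ (e.map f).IsDiag}
  · rw [insert_inter_of_mem he]
    exact ncard_insert_le _ _
  · rw [insert_inter_of_notMem he]
    exact Nat.le_succ _

variable [Finite V]

lemma changeCount_mono (h : E ⊆ F) : changeCount E f ≤ changeCount F f :=
  ncard_le_ncard (inter_subset_inter_left _ h) (toFinite _)

lemma changeCount_union (h : Disjoint E F) :
    changeCount (E ∪ F) f = changeCount E f + changeCount F f := by
  unfold changeCount
  rw [union_inter_distrib_right]
  exact ncard_union_eq (h.mono inter_subset_left inter_subset_left) (toFinite _) (toFinite _)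

lemma changeCount_regraft_le {f g : V → S} {u a b x y : V} (hab : a ≠ b) (hux : u ≠ x)
    (huy : u ≠ y) (hu : g u = f x) (ha : g a = f a) (hb : g b = f b) (hx : g x = f x)
    (hy : g y = f y) :
    changeCount {s(a, b), s(u, x), s(u, y)} g ≤ changeCount {s(u, a), s(u, b), s(x, y)} f := by
  classical
  calc changeCount {s(a, b), s(u, x), s(u, y)} g
      ≤ changeCount {s(a, b)} g + (changeCount {s(u, x)} g + changeCount {s(u, y)} g) := by
        rw [insert_eq, insert_eq]
        exact changeCount_union_le.trans (Nat.add_le_add_left changeCount_union_le _)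
    _ ≤ changeCount {s(u, a)} f + (changeCount {s(u, b)} f + changeCount {s(x, y)} f) := by
        simp only [changeCount_singleton, hu, ha, hb, hx, hy]
        split_ifs <;> simp_all
    _ = changeCount {s(u, a), s(u, b), s(x, y)} f := by
        rw [insert_eq, insert_eq, changeCount_union, changeCount_union] <;>
          grind [Sym2.eq_iff]

lemma changeCount_le_add_one {E' N R : Set (Sym2 V)} {f' : V → S} (e : Sym2 V)
    (hE' : E' ⊆ E \ R ∪ N) (hR : R ⊆ E) (hf : ∀ e' ∈ E \ insert e R, ∀ w ∈ e', f' w = f w)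
    (hN : changeCount N f' ≤ changeCount R f) :
    changeCount E' f' ≤ changeCount E f + 1 := by
  set M := E \ insert e R
  have hE'M : E' ⊆ insert e (M ∪ N) := by
    intro d hd
    rcases hE' hd with ⟨hdE, hdR⟩ | hdN
    · by_cases hde : d = e
      · exact hde ▸ mem_insert d _
      · exact mem_insert_of_mem e (Or.inl ⟨hdE, by simp [hde, hdR]⟩)
    · exact mem_insert_of_mem e (Or.inr hdN)
  calc changeCount E' f' ≤ changeCount (insert e (M ∪ N)) f' := changeCount_mono hE'M
    _ ≤ changeCount M f' + changeCount N f' + 1 :=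
        (changeCount_insert_le e).trans (Nat.add_le_add_right changeCount_union_le 1)
    _ ≤ changeCount M f + changeCount R f + 1 := by rw [changeCount_congr hf]; omega
    _ = changeCount (M ∪ R) f + 1 := by
        rw [changeCount_union (disjoint_sdiff_left.mono_right (subset_insert e R))]
    _ ≤ changeCount E f + 1 :=
        Nat.add_le_add_right (changeCount_mono (union_subset sdiff_subset hR)) 1

end ChangeCount

lemma SimpleGraph.IsAcyclic.eq_of_adj_of_adj {V : Type*} {G : SimpleGraph V} (hG : G.IsAcyclic)
    {u v x y : V} (huv : u ≠ v) (hux : G.Adj u x) (hxv : G.Adj x v) (huy : G.Adj u y)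
    (hyv : G.Adj y v) : x = y := by
  have hpath : ∀ {z} (huz : G.Adj u z) (hzv : G.Adj z v),
      (Walk.cons huz (Walk.cons hzv .nil)).IsPath :=
    fun huz hzv => by simp [huz.ne, hzv.ne, huv]
  have := congrArg (fun p : G.Path u v => p.1.getVert 1)
    ((hG.subsingleton_path u v).elim ⟨_, hpath hux hxv⟩ ⟨_, hpath huy hyv⟩)
  simpa using this

lemma SimpleGraph.IsAcyclic.sym2_mk_ne_of_adj {V : Type*} {G : SimpleGraph V} (hG : G.IsAcyclic)
    {u v x y p q : V} (huv : u ≠ v) (hxy : x ≠ y) (hux : G.Adj u x) (huy : G.Adj u y)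
    (hvp : G.Adj v p) (hvq : G.Adj v q) : s(x, y) ≠ s(p, q) := by
  intro h
  rcases Sym2.eq_iff.mp h with ⟨rfl, rfl⟩ | ⟨rfl, rfl⟩
  · exact hxy (hG.eq_of_adj_of_adj huv hux hvp.symm huy hvq.symm)
  · exact hxy (hG.eq_of_adj_of_adj huv hux hvq.symm huy hvp.symm)

section PhyloTree

variable {V : Type*} [Fintype V] {L : Set V} {S : Type*}

lemma PhyloTree.neighborSet_eq (T : PhyloTree V L) {u v a b : V} (hu : u ∉ L)
    (hv : T.graph.Adj u v) (ha : T.graph.Adj u a) (hb : T.graph.Adj u b)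
    (hab : a ≠ b) (hav : a ≠ v) (hbv : b ≠ v) : T.graph.neighborSet u = {v, a, b} := by
  have hsub : ({v, a, b} : Set V) ⊆ T.graph.neighborSet u := by
    rintro w (rfl | rfl | rfl) <;> assumption
  have hcard : ({v, a, b} : Set V).ncard = 3 := by
    rw [ncard_insert_of_notMem (by simp [hav.symm, hbv.symm]), ncard_pair hab]
  exact (eq_of_subset_of_ncard_le hsub (by rw [hcard, T.internal_deg u hu]) (toFinite _)).symm

lemma PhyloTree.eq_or_eq_or_eq_of_mem_edgeSet (T : PhyloTree V L) {u v a b : V} (hu : u ∉ L)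
    (hv : T.graph.Adj u v) (ha : T.graph.Adj u a) (hb : T.graph.Adj u b)
    (hab : a ≠ b) (hav : a ≠ v) (hbv : b ≠ v) {e : Sym2 V} (he : e ∈ T.graph.edgeSet)
    (hue : u ∈ e) : e = s(u, v) ∨ e = s(u, a) ∨ e = s(u, b) := by
  obtain ⟨z, rfl⟩ := Sym2.mem_iff_exists.mp hue
  have hz : z ∈ T.graph.neighborSet u := he
  rw [T.neighborSet_eq hu hv ha hb hab hav hbv] at hz
  rcases hz with rfl | rfl | rfl <;> simp

lemma PhyloTree.notMem_of_mem_sdiff (T : PhyloTree V L) {u v a b : V} (hu : u ∉ L)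
    (hv : T.graph.Adj u v) (ha : T.graph.Adj u a) (hb : T.graph.Adj u b)
    (hab : a ≠ b) (hav : a ≠ v) (hbv : b ≠ v) {R : Set (Sym2 V)} (haR : s(u, a) ∈ R)
    (hbR : s(u, b) ∈ R) {e : Sym2 V} (he : e ∈ T.graph.edgeSet \ insert s(u, v) R) : u ∉ e :=
  fun hue => by
    rcases T.eq_or_eq_or_eq_of_mem_edgeSet hu hv ha hb hab hav hbv he.1 hue with rfl | rfl | rfl
    exacts [he.2 (mem_insert _ _), he.2 (mem_insert_of_mem _ haR), he.2 (mem_insert_of_mem _ hbR)]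

theorem SPRMove.exists_changedEdges_le {T T' : PhyloTree V L} (h : SPRMove T T') (f : V → S) :
    ∃ f' : V → S, (∀ w ∈ L, f' w = f w) ∧
      changedEdges T'.graph f' ≤ changedEdges T.graph f + 1 := by
  classical
  obtain ⟨u, v, a, b, x, y, huL, huv, hua, hub, hab, hav, hbv, hxy, hux, huy, hT'⟩ := h
  have hf' : ∀ w, w ≠ u → update f u (f x) w = f w := fun w hw => update_of_ne hw _ _
  refine ⟨update f u (f x), fun w hw => hf' w (ne_of_mem_of_not_mem hw huL), ?_⟩
  refine changeCount_le_add_one s(u, v) (R := {s(u, a), s(u, b), s(x, y)})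
    (N := {s(a, b), s(u, x), s(u, y)}) ?_ ?_ ?_ ?_
  · rw [hT', edgeSet_fromEdgeSet]
    exact sdiff_subset
  · simp [insert_subset_iff, hua, hub, hxy]
  · exact fun e he w hw => hf' w (ne_of_mem_of_not_mem hw
      (T.notMem_of_mem_sdiff huL huv hua hub hab hav hbv (by simp) (by simp) he))
  · exact changeCount_regraft_le hab hux huy (update_self ..) (hf' a hua.ne') (hf' b hub.ne')
      (hf' x (Ne.symm hux)) (hf' y (Ne.symm huy))

theorem TBRMove.exists_changedEdges_le {T T' : PhyloTree V L} (h : TBRMove T T') (f : V → S) :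
    ∃ f' : V → S, (∀ w ∈ L, f' w = f w) ∧
      changedEdges T'.graph f' ≤ changedEdges T.graph f + 1 := by
  classical
  rcases h with h | ⟨u, v, a, b, c, d, x, y, p, q, huL, hvL, huv, hua, hub, hab, hav, hbv, hvc,
    hvd, hcd, hcu, hdu, hxy, hux, huy, hvx, hvy, hpq, hup, huq, hvp, hvq, hT'⟩
  · exact h.exists_changedEdges_le f
  have hT'adj : ∀ {w z : V}, s(w, z) ∈ ({s(a, b), s(c, d), s(u, x), s(u, y), s(v, p), s(v, q)} :
      Set (Sym2 V)) → w ≠ z → T'.graph.Adj w z := fun hwz hne => by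
    rw [hT', fromEdgeSet_adj]
    exact ⟨Or.inr hwz, hne⟩
  -- otherwise `u x v y` would be a cycle in `T'`
  have hxypq : s(x, y) ≠ s(p, q) :=
    T'.isTree.isAcyclic.sym2_mk_ne_of_adj huv.ne hxy.ne (hT'adj (by simp) hux)
      (hT'adj (by simp) huy) (hT'adj (by simp) hvp) (hT'adj (by simp) hvq)
  set f' := update (update f u (f x)) v (f p)
  have hf' : ∀ w, w ≠ u → w ≠ v → f' w = f w := fun w hwu hwv => by simp [f', hwu, hwv]
  have hf'u : f' u = f x := by simp [f', huv.ne]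
  have hf'v : f' v = f p := by simp [f']
  refine ⟨f', fun w hw => hf' w (ne_of_mem_of_not_mem hw huL) (ne_of_mem_of_not_mem hw hvL), ?_⟩
  refine changeCount_le_add_one s(u, v)
    (R := {s(u, a), s(u, b), s(x, y)} ∪ {s(v, c), s(v, d), s(p, q)})
    (N := {s(a, b), s(u, x), s(u, y)} ∪ {s(c, d), s(v, p), s(v, q)}) ?_ ?_ ?_ ?_
  · rw [hT', edgeSet_fromEdgeSet]
    intro e he
    simp only [mem_sdiff, mem_union, mem_insert_iff, mem_singleton_iff] at he ⊢
    tauto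
  · simp [insert_subset_iff, hua, hub, hxy, hvc, hvd, hpq]
  · refine fun e he w hw => hf' w (ne_of_mem_of_not_mem hw ?_) (ne_of_mem_of_not_mem hw ?_)
    · exact T.notMem_of_mem_sdiff huL huv hua hub hab hav hbv (by simp) (by simp) he
    · exact T.notMem_of_mem_sdiff hvL huv.symm hvc hvd hcd hcu hdu (by simp) (by simp)
        (Sym2.eq_swap ▸ he)
  · have hR : Disjoint ({s(u, a), s(u, b), s(x, y)} : Set (Sym2 V))
        {s(v, c), s(v, d), s(p, q)} := by
      simp [huv.ne', hav.symm, hbv.symm, hcu, hdu, hvx, hvy, hup.symm, huq.symm, hxypq.symm]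
    calc _ ≤ changeCount {s(a, b), s(u, x), s(u, y)} f' +
          changeCount {s(c, d), s(v, p), s(v, q)} f' := changeCount_union_le
      _ ≤ changeCount {s(u, a), s(u, b), s(x, y)} f + changeCount {s(v, c), s(v, d), s(p, q)} f :=
          add_le_add
            (changeCount_regraft_le hab hux huy hf'u (hf' a hua.ne' hav) (hf' b hub.ne' hbv)
              (hf' x (Ne.symm hux) (Ne.symm hvx)) (hf' y (Ne.symm huy) (Ne.symm hvy)))
            (changeCount_regraft_le hcd hvp hvq hf'v (hf' c hcu hvc.ne') (hf' d hdu hvd.ne')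
              (hf' p (Ne.symm hup) (Ne.symm hvp)) (hf' q (Ne.symm huq) (Ne.symm hvq)))
      _ = _ := (changeCount_union hR).symm

lemma parsLen_le_add_one_of_forall {T T' : PhyloTree V L} {X : L → S}
    (h : ∀ f : V → S, (∀ v : L, f v = X v) → ∃ f' : V → S, (∀ v : L, f' v = X v) ∧
      changedEdges T'.graph f' ≤ changedEdges T.graph f + 1) :
    parsLen T' X ≤ parsLen T X + 1 := by
  by_cases hX : ∃ f : V → S, ∀ v : L, f v = X v
  · obtain ⟨f₀, hf₀⟩ := hX
    obtain ⟨f, hf, hfT⟩ : parsLen T X ∈ {n | ∃ f : V → S, (∀ v : L, f v = X v) ∧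
        changedEdges T.graph f = n} := Nat.sInf_mem ⟨_, f₀, hf₀, rfl⟩
    obtain ⟨f', hf', hle⟩ := h f hf
    calc parsLen T' X ≤ changedEdges T'.graph f' := Nat.sInf_le ⟨f', hf', rfl⟩
      _ ≤ parsLen T X + 1 := hfT ▸ hle
  · have : parsLen T' X = 0 :=
      Nat.sInf_eq_zero.2 (Or.inr (eq_empty_of_forall_notMem fun _ ⟨f, hf, _⟩ => hX ⟨f, hf⟩))
    omega

end PhyloTree

/-- A single TBR rearrangement increases the parsimony length of any character
by at most one. -/
theorem tbr_move_parsimony_le {V : Type*} [Fintype V] {L : Set V} {S : Type*}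
    (T T' : PhyloTree V L) (X : L → S) (h : TBRMove T T') :
    parsLen T' X ≤ parsLen T X + 1 :=
  parsLen_le_add_one_of_forall fun f hf =>
    let ⟨f', hf', hle⟩ := h.exists_changedEdges_le f
    ⟨f', fun v => (hf' v v.2).trans (hf v), hle⟩
end

section
/- Performing a single SPR (subtree prune and regraft) rearrangement on a fully resolved phylogenetic tree increases the parsimony length of any unordered reversible character by at most one. -/
/-! Take an optimal extension `f` on `T` and give the regrafted vertex `u` the state of `x`.
The new edge `{u,x}` is then unchanged, `{u,y}` changes exactly when `{x,y}` did, `{a,b}` can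
change only if `{u,a}` or `{u,b}` did, and the retained edge `{u,v}` is the only one whose
status can get worse. -/

open Function

section

variable {V S : Type*}

def changedEdgeSet (G : SimpleGraph V) (f : V → S) : Set (Sym2 V) :=
  {e | e ∈ G.edgeSet ∧ ¬ (Sym2.map f e).IsDiag}

theorem changedEdges_eq_ncard (G : SimpleGraph V) (f : V → S) :
    changedEdges G f = (changedEdgeSet G f).ncard := rfl

@[simp]
theorem mk_mem_changedEdgeSet {G : SimpleGraph V} {f : V → S} {p q : V} :
    s(p, q) ∈ changedEdgeSet G f ↔ G.Adj p q ∧ f p ≠ f q := by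
  simp [changedEdgeSet]

theorem changedEdgeSet_update_subset [DecidableEq V] {G G' : SimpleGraph V} (f : V → S)
    {u v a b x y : V} (hNu : G.neighborSet u ⊆ {v, a, b}) (hua : G.Adj u a) (hub : G.Adj u b)
    (hxy : G.Adj x y) (hux : u ≠ x) (huy : u ≠ y)
    (hG' : G'.edgeSet ⊆
      (G.edgeSet \ {s(u, a), s(u, b), s(x, y)}) ∪ {s(a, b), s(u, x), s(u, y)}) :
    changedEdgeSet G' (update f u (f x)) ⊆ insert s(u, v)
      ((fun e ↦ if e = s(x, y) then s(u, y) else if u ∈ e then s(a, b) else e) ''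
        changedEdgeSet G f) := by
  have hu_xy : ∀ w, s(u, w) ≠ s(x, y) := fun w h ↦ by
    rcases Sym2.eq_iff.mp h with ⟨rfl, -⟩ | ⟨rfl, -⟩ <;> contradiction
  rintro e ⟨he', hchg⟩
  rcases hG' he' with ⟨he, hR⟩ | hnew
  · by_cases heuv : e = s(u, v)
    · exact Or.inl heuv
    have hue : u ∉ e := by
      intro hue
      obtain ⟨w, rfl⟩ := Sym2.mem_iff_exists.mp hue
      rcases hNu (show G.Adj u w from he) with rfl | rfl | rfl <;> simp_all
    have hxy_e : e ≠ s(x, y) := fun h ↦ hR (by simp [h])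
    refine Or.inr ⟨e, ⟨he, ?_⟩, by simp [hue, hxy_e]⟩
    rwa [← Sym2.map_congr fun w hw ↦ update_of_ne (ne_of_mem_of_not_mem hw hue) (f x) f]
  · simp only [Set.mem_insert_iff, Set.mem_singleton_iff] at hnew
    rcases hnew with rfl | rfl | rfl
    · have hab : f a ≠ f b := by simpa [hua.ne', hub.ne'] using hchg
      refine Or.inr ?_
      by_cases hfa : f u = f a
      · exact ⟨s(u, b), mk_mem_changedEdgeSet.mpr ⟨hub, hfa ▸ hab⟩, by simp [hu_xy]⟩
      · exact ⟨s(u, a), mk_mem_changedEdgeSet.mpr ⟨hua, hfa⟩, by simp [hu_xy]⟩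
    · simp [Ne.symm hux] at hchg
    · refine Or.inr ⟨s(x, y), ?_, by simp⟩
      simpa [hxy, Ne.symm hux, Ne.symm huy] using hchg

theorem changedEdges_update_le [Finite V] [DecidableEq V] {G G' : SimpleGraph V} (f : V → S)
    {u v a b x y : V} (hNu : G.neighborSet u ⊆ {v, a, b}) (hua : G.Adj u a) (hub : G.Adj u b)
    (hxy : G.Adj x y) (hux : u ≠ x) (huy : u ≠ y)
    (hG' : G'.edgeSet ⊆
      (G.edgeSet \ {s(u, a), s(u, b), s(x, y)}) ∪ {s(a, b), s(u, x), s(u, y)}) :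
    changedEdges G' (update f u (f x)) ≤ changedEdges G f + 1 := by
  rw [changedEdges_eq_ncard, changedEdges_eq_ncard]
  calc _ ≤ (insert s(u, v) (_ '' changedEdgeSet G f)).ncard :=
        Set.ncard_le_ncard (changedEdgeSet_update_subset f hNu hua hub hxy hux huy hG')
    _ ≤ (_ '' changedEdgeSet G f).ncard + 1 := Set.ncard_insert_le _ _
    _ ≤ _ := by grw [Set.ncard_image_le]

namespace PhyloTree

variable [Fintype V] {L : Set V}

theorem neighborSet_eq_of_notMem (T : PhyloTree V L) {u v a b : V} (huL : u ∉ L)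
    (huv : T.graph.Adj u v) (hua : T.graph.Adj u a) (hub : T.graph.Adj u b)
    (hab : a ≠ b) (hav : a ≠ v) (hbv : b ≠ v) :
    T.graph.neighborSet u = {v, a, b} := by
  have hsub : ({v, a, b} : Set V) ⊆ T.graph.neighborSet u := by
    rintro w (rfl | rfl | rfl) <;> assumption
  refine (Set.eq_of_subset_of_ncard_le hsub ?_).symm
  rw [T.internal_deg u huL, Set.ncard_insert_of_notMem (by simp [hav.symm, hbv.symm]),
    Set.ncard_pair hab]

theorem parsLen_le_changedEdges (T : PhyloTree V L) (X : L → S) {f : V → S}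
    (hf : ∀ w : L, f w = X w) :
    parsLen T X ≤ changedEdges T.graph f :=
  Nat.sInf_le ⟨f, hf, rfl⟩

theorem exists_changedEdges_eq_parsLen (T : PhyloTree V L) (X : L → S)
    (hX : ∃ f : V → S, ∀ w : L, f w = X w) :
    ∃ f : V → S, (∀ w : L, f w = X w) ∧ changedEdges T.graph f = parsLen T X :=
  let ⟨f, hf⟩ := hX
  Nat.sInf_mem (s := {n | ∃ f : V → S, (∀ w : L, f w = X w) ∧ changedEdges T.graph f = n})
    ⟨_, f, hf, rfl⟩

theorem parsLen_eq_zero_of_not_exists_extension (T : PhyloTree V L) (X : L → S)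
    (hX : ¬ ∃ f : V → S, ∀ w : L, f w = X w) : parsLen T X = 0 := by
  refine Nat.sInf_eq_zero.mpr (Or.inr (Set.eq_empty_of_forall_notMem ?_))
  rintro n ⟨f, hf, -⟩
  exact hX ⟨f, hf⟩

end PhyloTree

end

/-- A single SPR rearrangement increases the parsimony length of any character
by at most one. -/
theorem spr_move_parsimony_le {V : Type*} [Fintype V] {L : Set V} {S : Type*}
    (T T' : PhyloTree V L) (X : L → S) (h : SPRMove T T') :
    parsLen T' X ≤ parsLen T X + 1 := by
  classical
  obtain ⟨u, v, a, b, x, y, huL, huv, hua, hub, hab, hav, hbv, hxy, hux, huy, hT'⟩ := h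
  by_cases hX : ∃ f : V → S, ∀ w : L, f w = X w
  swap
  · simp [T'.parsLen_eq_zero_of_not_exists_extension X hX]
  obtain ⟨f, hf, hfT⟩ := T.exists_changedEdges_eq_parsLen X hX
  have hf' : ∀ w : L, update f u (f x) w = X w := fun w ↦ by
    rw [update_of_ne (ne_of_mem_of_not_mem w.2 huL), hf]
  have hNu := (T.neighborSet_eq_of_notMem huL huv hua hub hab hav hbv).le
  have hT'E : T'.graph.edgeSet ⊆
      (T.graph.edgeSet \ {s(u, a), s(u, b), s(x, y)}) ∪ {s(a, b), s(u, x), s(u, y)} := by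
    rw [hT', SimpleGraph.edgeSet_fromEdgeSet]
    exact Set.sdiff_subset
  calc parsLen T' X ≤ changedEdges T'.graph (update f u (f x)) :=
        T'.parsLen_le_changedEdges X hf'
    _ ≤ changedEdges T.graph f + 1 := changedEdges_update_le f hNu hua hub hxy hux huy hT'E
    _ = parsLen T X + 1 := by rw [hfT]
end
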